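/- Let α_0 > 0, β_0 > 0, and c > 0. Then the inequality β_0² ω² + α_0² c² < (α_0 c − ω²)² + (α_0 + β_0)² ω² holds for every ω > 0 if and only if α_0 + 2β_0 ≥ 2c. -/

import Mathlib

/-! The gap between the two sides factors as `ω² (ω² + α₀ (α₀ + 2β₀ − 2c))`, so it is positive
for every `ω > 0` exactly when the constant term `α₀ (α₀ + 2β₀ − 2c)` is nonnegative; if it were
negative, `ω = √(−α₀ (α₀ + 2β₀ − 2c))` would make the gap vanish. -/

lemma forall_pos_sq_add_pos_iff (k : ℝ) : (∀ ω : ℝ, 0 < ω → 0 < ω ^ 2 + k) ↔ 0 ≤ k := by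
  refine ⟨fun h => ?_, fun hk ω hω => by positivity⟩
  by_contra! hk
  have hroot := h √(-k) (Real.sqrt_pos.mpr (neg_pos.mpr hk))
  rw [Real.sq_sqrt (neg_nonneg.mpr hk.le)] at hroot
  linarith

lemma transferFunction_gap_eq_sq_mul (α₀ β₀ c ω : ℝ) :
    (α₀ * c - ω ^ 2) ^ 2 + (α₀ + β₀) ^ 2 * ω ^ 2 - (β₀ ^ 2 * ω ^ 2 + α₀ ^ 2 * c ^ 2)
      = ω ^ 2 * (ω ^ 2 + α₀ * (α₀ + 2 * β₀ - 2 * c)) := by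
  ring

theorem stmt_8_general (α₀ β₀ c : ℝ) (hα : 0 < α₀) :
    (∀ ω : ℝ, 0 < ω →
      β₀ ^ 2 * ω ^ 2 + α₀ ^ 2 * c ^ 2
        < (α₀ * c - ω ^ 2) ^ 2 + (α₀ + β₀) ^ 2 * ω ^ 2)
    ↔ α₀ + 2 * β₀ ≥ 2 * c := by
  have hgap : ∀ ω : ℝ, 0 < ω →
      (β₀ ^ 2 * ω ^ 2 + α₀ ^ 2 * c ^ 2 < (α₀ * c - ω ^ 2) ^ 2 + (α₀ + β₀) ^ 2 * ω ^ 2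
        ↔ 0 < ω ^ 2 + α₀ * (α₀ + 2 * β₀ - 2 * c)) := fun ω hω => by
    rw [← sub_pos, transferFunction_gap_eq_sq_mul, mul_pos_iff_of_pos_left (pow_pos hω 2)]
  rw [forall₂_congr hgap, forall_pos_sq_add_pos_iff, mul_nonneg_iff_of_pos_left hα, sub_nonneg,
    ge_iff_le]

/-- String-stability criterion: |G(jω)| < 1 for all ω > 0, written as the real
inequality β₀²ω² + α₀²c² < (α₀c − ω²)² + (α₀ + β₀)²ω², holds for every ω > 0 iff
α₀ + 2β₀ ≥ 2c. -/
theorem stmt_8 (α₀ β₀ c : ℝ) (hα : 0 < α₀) (hβ : 0 < β₀) (hc : 0 < c) :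
    (∀ ω : ℝ, 0 < ω →
      β₀ ^ 2 * ω ^ 2 + α₀ ^ 2 * c ^ 2
        < (α₀ * c - ω ^ 2) ^ 2 + (α₀ + β₀) ^ 2 * ω ^ 2)
    ↔ α₀ + 2 * β₀ ≥ 2 * c :=
  stmt_8_general α₀ β₀ c hα
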